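/- Let T be a tree on label set 𝒳(T), let X ⊆ 𝒳(T) and T' = T|_X. For any nodes u, v of T', the corresponding node u_T is an ancestor of v_T in T if and only if u is an ancestor of v in T'. -/
import Mathlib


/-!
Common framework: rooted binary trees with leaves bijectively labeled by a
finite label set, leaf removal, restriction, the leaf-removal distance `d_LR`,
compatibility, leaf-disagreements, triplets, LPR moves, etc.
-/

universe u

/-- A rooted binary tree whose leaves carry labels from `α`. -/
inductive LTree (α : Type u) : Type u where
  | leaf : α → LTree α
  | node : LTree α → LTree α → LTree α

namespace LTree

variable {α : Type u} [DecidableEq α]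

/-- The set of leaf labels of a tree. -/
def labels : LTree α → Finset α
  | leaf a => {a}
  | node l r => labels l ∪ labels r

/-- A tree is `Good` when its leaves carry pairwise distinct labels
(i.e. the leaves are bijectively labeled). -/
def Good : LTree α → Prop
  | leaf _ => True
  | node l r => Good l ∧ Good r ∧ Disjoint (labels l) (labels r)

/-- `T` is a (rooted binary, uniquely leaf-labeled) tree on label set `𝒳`. -/
def IsTreeOn (T : LTree α) (𝒳 : Finset α) : Prop :=
  Good T ∧ labels T = 𝒳

/-- Equality of rooted trees: children of a node are unordered. -/
inductive Iso : LTree α → LTree α → Prop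
  | leaf (a : α) : Iso (leaf a) (leaf a)
  | node {l₁ r₁ l₂ r₂ : LTree α} :
      Iso l₁ l₂ → Iso r₁ r₂ → Iso (node l₁ r₁) (node l₂ r₂)
  | swap {l₁ r₁ l₂ r₂ : LTree α} :
      Iso l₁ r₂ → Iso r₁ l₂ → Iso (node l₁ r₁) (node l₂ r₂)

/-- Equality of possibly empty trees (`none` is the empty tree). -/
def OptIso : Option (LTree α) → Option (LTree α) → Prop
  | none, none => True
  | some t₁, some t₂ => Iso t₁ t₂
  | _, _ => False

/-- Restriction `T|_S`: keep exactly the leaves with labels in `S`, suppressing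
the resulting degree-two vertices and degree-one roots; the result is `none`
when no leaf survives. -/
def restrict : LTree α → Finset α → Option (LTree α)
  | leaf a, S => if a ∈ S then some (leaf a) else none
  | node l r, S =>
    match restrict l S, restrict r S with
    | some l', some r' => some (node l' r')
    | some l', none => some l'
    | none, some r' => some r'
    | none, none => none

/-- `T − X`: remove from `T` every leaf whose label lies in `X`. -/
def remove (T : LTree α) (X : Finset α) : Option (LTree α) :=
  restrict T (labels T \ X)

/-- The leaf-removal distance `d_LR(T₁,T₂)`: the minimum number of labels
whose removal makes the two trees equal. -/
noncomputable def dLR (T₁ T₂ : LTree α) : ℕ :=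
  sInf {n | ∃ X : Finset α, X ⊆ labels T₁ ∪ labels T₂ ∧ X.card = n ∧
    OptIso (remove T₁ X) (remove T₂ X)}

def labelsO : Option (LTree α) → Finset α
  | none => ∅
  | some t => labels t

def GoodO : Option (LTree α) → Prop
  | none => True
  | some t => Good t

def restrictO : Option (LTree α) → Finset α → Option (LTree α)
  | none, _ => none
  | some t, S => restrict t S

/-- A family of (possibly empty) trees is compatible if there is a single tree,
on the union of their label sets, which displays all of them. -/
def CompatibleFamO {ι : Type*} (f : ι → Option (LTree α)) : Prop :=
  ∃ TO : Option (LTree α), GoodO TO ∧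
    (↑(labelsO TO) : Set α) = (⋃ i, ↑(labelsO (f i))) ∧
    ∀ i, OptIso (restrictO TO (labelsO (f i))) (f i)

/-- A family of trees is compatible if a single tree displays all of them. -/
def CompatibleFam {ι : Type*} (𝒯 : ι → LTree α) : Prop :=
  CompatibleFamO fun i => some (𝒯 i)

/-- `X` is a leaf-disagreement for the family `𝒯`: removing `X i` from `𝒯 i`
yields a compatible family. -/
def IsLeafDisagreement {ι : Type*} (𝒯 : ι → LTree α) (X : ι → Finset α) : Prop :=
  CompatibleFamO fun i => remove (𝒯 i) (X i)

/-- `X'` is a label-disagreement for the family `𝒯`. -/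
def IsLabelDisagreement {ι : Type*} (𝒯 : ι → LTree α) (X' : Finset α) : Prop :=
  CompatibleFamO fun i => remove (𝒯 i) X'

/-- `MASTRL 𝒯`: the minimum size of a leaf-disagreement for `𝒯`. -/
noncomputable def MASTRL {t : ℕ} (𝒯 : Fin t → LTree α) : ℕ :=
  sInf {v | ∃ X : Fin t → Finset α, (∀ i, X i ⊆ labels (𝒯 i)) ∧
    (∑ i, (X i).card) = v ∧ IsLeafDisagreement 𝒯 X}

/-- The triplet `ab|c` (as a tree). -/
def tripletTree (a b c : α) : LTree α := node (node (leaf a) (leaf b)) (leaf c)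

/-- A rooted triplet: a tree with exactly three (distinctly labeled) leaves. -/
def IsTriplet (R : LTree α) : Prop := Good R ∧ (labels R).card = 3

/-- `ab|c` is a triplet of `T`, i.e. `T|_{a,b,c} = ab|c`. -/
def IsTripletOf (T : LTree α) (a b c : α) : Prop :=
  OptIso (restrict T {a, b, c}) (some (tripletTree a b c))

/-- `tr(T)`: the triplet decomposition of `T`. -/
def trSet (T : LTree α) : Set (LTree α) :=
  {R | ∃ a b c : α, R = tripletTree a b c ∧ IsTripletOf T a b c}

/-- A set of trees is compatible: some tree on the union of the label sets
displays every member. -/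
def CompatibleSet (S : Set (LTree α)) : Prop :=
  ∃ TO : Option (LTree α), GoodO TO ∧
    (↑(labelsO TO) : Set α) = (⋃ R ∈ S, ↑(labels R)) ∧
    ∀ R ∈ S, OptIso (restrictO TO (labels R)) (some R)

/-- `MINRTI ℛ`: the minimum number of triplets to delete from `ℛ` so that the
remaining triplets are compatible. -/
noncomputable def MINRTI {t : ℕ} (R : Fin t → LTree α) : ℕ :=
  sInf {m | ∃ s : Finset (Fin t), s.card = m ∧
    CompatibleFam (fun i : {i : Fin t // i ∉ s} => R i.1)}

/-- Graft the leaf `x` at the position (edge) addressed by `p` in `T`.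
The empty address grafts `x` above the root of `T` (the `⊥` case); the address
of an internal/leaf vertex `v` grafts `x` on the edge between `v` and its
parent.  `none` when the address is invalid. -/
def graftAt (x : α) : LTree α → List Bool → Option (LTree α)
  | T, [] => some (node (leaf x) T)
  | leaf _, _ :: _ => none
  | node l r, b :: p =>
    if b then (graftAt x l p).map (fun l' => node l' r)
    else (graftAt x r p).map (fun r' => node l r')

/-- `T'` is obtained from `T` by a single LPR (leaf prune-and-regraft) move on
the leaf `x`: prune `x` from `T` and regraft it, either on an edge of
`T − {x}` or above its root. -/
def LPRStep (x : α) (T T' : LTree α) : Prop :=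
  (remove T {x} = none ∧ T' = leaf x) ∨
  ∃ T₀ p, remove T {x} = some T₀ ∧ graftAt x T₀ p = some T'

/-- `TurnsInto L T T'`: the LPR sequence with (ordered) leaf list `L` turns
`T` into `T'`. -/
inductive TurnsInto : List α → LTree α → LTree α → Prop
  | nil {T T' : LTree α} : Iso T T' → TurnsInto [] T T'
  | cons {x : α} {xs : List α} {T T'' T' : LTree α} :
      LPRStep x T T'' → TurnsInto xs T'' T' → TurnsInto (x :: xs) T T'

/-- `confset(T₁,T₂)`: the collection of 3-label sets `{a,b,c}` such that
`T₁` contains a triplet on `{a,b,c}` conflicting with a triplet of `T₂`. -/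
def confset (T₁ T₂ : LTree α) : Set (Finset α) :=
  {s | ∃ a b c : α, s = {a, b, c} ∧ IsTripletOf T₁ a b c ∧
    (IsTripletOf T₂ a c b ∨ IsTripletOf T₂ b c a)}

/-- `X` is a minimal disagreement between `T₁` and `T₂`. -/
def MinimalDisagreement (T₁ T₂ : LTree α) (X : Finset α) : Prop :=
  X ⊆ labels T₁ ∪ labels T₂ ∧
  OptIso (remove T₁ X) (remove T₂ X) ∧
  ∀ X' ⊂ X, ¬ OptIso (remove T₁ X') (remove T₂ X')

/-- `u` is (the rooted subtree hanging at) a node of `T`. -/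
inductive IsSubtree : LTree α → LTree α → Prop
  | refl (T : LTree α) : IsSubtree T T
  | left {u l r : LTree α} : IsSubtree u l → IsSubtree u (node l r)
  | right {u l r : LTree α} : IsSubtree u r → IsSubtree u (node l r)

/-- `u` is the least common ancestor in `T` of the labels in `Z`. -/
def IsLCA (T : LTree α) (Z : Finset α) (u : LTree α) : Prop :=
  IsSubtree u T ∧ Z ⊆ labels u ∧
    ∀ w, IsSubtree w T → Z ⊆ labels w → IsSubtree u w

theorem labels_nonempty (t : LTree α) : (labels t).Nonempty := by
  induction t with
  | leaf a => exact ⟨a, by simp [labels]⟩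
  | node l r ihl ihr =>
    exact ihl.mono (by simp [labels, Finset.subset_union_left])

theorem labelsO_restrict (t : LTree α) (X : Finset α) :
    labelsO (restrict t X) = labels t ∩ X := by
  induction t with
  | leaf a =>
    by_cases ha : a ∈ X <;>
      simp [restrict, labels, labelsO, ha, Finset.singleton_inter_of_mem,
        Finset.singleton_inter_of_notMem]
  | node l r ihl ihr =>
    have hdist : (labels l ∪ labels r) ∩ X = labels l ∩ X ∪ labels r ∩ X :=
      Finset.union_inter_distrib_right _ _ _
    cases hl : restrict l X <;> cases hr : restrict r X <;>
      simp_all [restrict, labels, labelsO, hdist] <;>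
      simp [← ihl, ← ihr]

theorem labels_restrict {t t' : LTree α} {X : Finset α}
    (h : restrict t X = some t') : labels t' = labels t ∩ X := by
  have := labelsO_restrict t X
  rw [h] at this
  simpa [labelsO] using this

theorem good_restrict : ∀ {t t' : LTree α} {X : Finset α},
    Good t → restrict t X = some t' → Good t' := by
  intro t
  induction t with
  | leaf a =>
    intro t' X hg h
    by_cases ha : a ∈ X <;> simp [restrict, ha] at h
    subst h; trivial
  | node l r ihl ihr =>
    intro t' X hg h
    obtain ⟨hgl, hgr, hd⟩ := hg
    cases hl : restrict l X <;> cases hr : restrict r X <;>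
      simp [restrict, hl, hr] at h
    · subst h; exact ihr hgr hr
    · subst h; exact ihl hgl hl
    · subst h
      refine ⟨ihl hgl hl, ihr hgr hr, ?_⟩
      rw [labels_restrict hl, labels_restrict hr]
      exact (hd.mono Finset.inter_subset_left Finset.inter_subset_left)

theorem labels_subset_of_subtree {u t : LTree α} (h : IsSubtree u t) :
    labels u ⊆ labels t := by
  induction h with
  | refl => exact subset_rfl
  | left _ ih => exact ih.trans (by simp [labels, Finset.subset_union_left])
  | right _ ih => exact ih.trans (by simp [labels, Finset.subset_union_right])

theorem subtree_leaf {u : LTree α} {a : α} (h : IsSubtree u (leaf a)) :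
    u = leaf a := by
  cases h with
  | refl => rfl

theorem subtree_of_labels_subset {t : LTree α} (hg : Good t) :
    ∀ {u v : LTree α}, IsSubtree u t → IsSubtree v t →
      labels v ⊆ labels u → IsSubtree v u := by
  induction t with
  | leaf a =>
    intro u v hu hv _
    rw [subtree_leaf hu, subtree_leaf hv]
    exact IsSubtree.refl _
  | node l r ihl ihr =>
    obtain ⟨hgl, hgr, hd⟩ := hg
    intro u v hu hv hsub
    cases hu with
    | refl => exact hv
    | left hu' =>
      cases hv with
      | refl =>
        exfalso
        obtain ⟨x, hx⟩ := labels_nonempty r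
        have hxl : x ∈ labels l :=
          labels_subset_of_subtree hu' (hsub (by simp [labels, hx]))
        exact Finset.disjoint_left.mp hd hxl hx
      | left hv' => exact ihl hgl hu' hv' hsub
      | right hv' =>
        exfalso
        obtain ⟨x, hx⟩ := labels_nonempty v
        have hxl : x ∈ labels l := labels_subset_of_subtree hu' (hsub hx)
        have hxr : x ∈ labels r := labels_subset_of_subtree hv' hx
        exact Finset.disjoint_left.mp hd hxl hxr
    | right hu' =>
      cases hv with
      | refl =>
        exfalso
        obtain ⟨x, hx⟩ := labels_nonempty l
        have hxr : x ∈ labels r :=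
          labels_subset_of_subtree hu' (hsub (by simp [labels, hx]))
        exact Finset.disjoint_left.mp hd hx hxr
      | left hv' =>
        exfalso
        obtain ⟨x, hx⟩ := labels_nonempty v
        have hxr : x ∈ labels r := labels_subset_of_subtree hu' (hsub hx)
        have hxl : x ∈ labels l := labels_subset_of_subtree hv' hx
        exact Finset.disjoint_left.mp hd hxl hxr
      | right hv' => exact ihr hgr hu' hv' hsub

theorem exists_subtree_restrict : ∀ {t t' u : LTree α} {X : Finset α},
    restrict t X = some t' → IsSubtree u t' →
    ∃ w, IsSubtree w t ∧ restrict w X = some u := by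
  intro t
  induction t with
  | leaf a =>
    intro t' u X h hu
    by_cases ha : a ∈ X <;> simp [restrict, ha] at h
    subst h
    rw [subtree_leaf hu]
    exact ⟨leaf a, IsSubtree.refl _, by simp [restrict, ha]⟩
  | node l r ihl ihr =>
    intro t' u X h hu
    cases hl : restrict l X <;> cases hr : restrict r X <;>
      simp [restrict, hl, hr] at h
    · subst h
      obtain ⟨w, hw, hwr⟩ := ihr hr hu
      exact ⟨w, IsSubtree.right hw, hwr⟩
    · subst h
      obtain ⟨w, hw, hwr⟩ := ihl hl hu
      exact ⟨w, IsSubtree.left hw, hwr⟩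
    · subst h
      cases hu with
      | refl => exact ⟨node l r, IsSubtree.refl _, by simp [restrict, hl, hr]⟩
      | left hu' =>
        obtain ⟨w, hw, hwr⟩ := ihl hl hu'
        exact ⟨w, IsSubtree.left hw, hwr⟩
      | right hu' =>
        obtain ⟨w, hw, hwr⟩ := ihr hr hu'
        exact ⟨w, IsSubtree.right hw, hwr⟩

end LTree

open LTree

/-- Lemma 17 of the paper.  Let `T' = T|_X` and let `u, v` be
nodes of `T'` with corresponding nodes `u_T = lca_T(ℒ_{T'}(u))` and
`v_T = lca_T(ℒ_{T'}(v))` in `T`.  Then `u_T` is an ancestor of `v_T` in `T` iff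
`u` is an ancestor of `v` in `T'`. -/
theorem corresponding_node_ancestor {α : Type u} [DecidableEq α]
    (T T' : LTree α) (hT : Good T) (X : Finset α) (hX : X ⊆ labels T)
    (hres : restrict T X = some T')
    (u v uT vT : LTree α)
    (hu : IsSubtree u T') (hv : IsSubtree v T')
    (huT : IsLCA T (labels u) uT) (hvT : IsLCA T (labels v) vT) :
    IsSubtree vT uT ↔ IsSubtree v u := by
  obtain ⟨huT_sub, huT_cont, huT_min⟩ := huT
  obtain ⟨hvT_sub, hvT_cont, hvT_min⟩ := hvT
  have hgT' : Good T' := good_restrict hT hres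
  have hlabT' : labels T' = labels T ∩ X := labels_restrict hres
  constructor
  · intro h
    obtain ⟨w, hwT, hwres⟩ := exists_subtree_restrict hres hu
    have hlabu : labels u = labels w ∩ X := labels_restrict hwres
    have huTw : IsSubtree uT w :=
      huT_min w hwT (by rw [hlabu]; exact Finset.inter_subset_left)
    have hvsub : labels v ⊆ labels u := by
      intro x hx
      have h2 : x ∈ labels uT := labels_subset_of_subtree h (hvT_cont hx)
      have h3 : x ∈ X := by
        have hx' : x ∈ labels T' := labels_subset_of_subtree hv hx
        rw [hlabT'] at hx'
        exact (Finset.mem_inter.mp hx').2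
      have h4 : x ∈ labels w := labels_subset_of_subtree huTw h2
      rw [hlabu]
      exact Finset.mem_inter.mpr ⟨h4, h3⟩
    exact subtree_of_labels_subset hgT' hu hv hvsub
  · intro h
    exact hvT_min uT huT_sub ((labels_subset_of_subtree h).trans huT_cont)
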